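/- Define f(ρ, θ, φ) = (e^{2ρ cos θ} + e^{2ρ cos(θ−φ)}) / (e^{ρ cos θ} + e^{ρ cos(θ−φ)})² for real ρ, θ, φ. Then for every ρ ≥ 0, every real θ, and every φ ∈ [0, π], the directional derivative ∂f/∂θ + 2 ∂f/∂φ evaluated at (ρ, θ, φ) is nonnegative. -/

import Mathlib

open Real

/-- The polar-coordinate integrand arising from the variance of the
two-center softmax projection. -/
noncomputable def f (ρ θ φ : ℝ) : ℝ :=
  (exp (2 * ρ * cos θ) + exp (2 * ρ * cos (θ - φ))) /
    (exp (ρ * cos θ) + exp (ρ * cos (θ - φ))) ^ 2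

lemma f_dd_algebra (ρ a b s1 s2 : ℝ) (h : 0 < a + b) :
    ((a * a * (2 * ρ * (-s1)) + b * b * (2 * ρ * (-s2))) * (a + b) ^ 2 -
        (a * a + b * b) * (2 * (a + b) ^ 1 * (a * (ρ * (-s1)) + b * (ρ * (-s2))))) /
        ((a + b) ^ 2) ^ 2 +
      2 * ((b * b * (2 * ρ * s2) * (a + b) ^ 2 -
        (a * a + b * b) * (2 * (a + b) ^ 1 * (b * (ρ * s2)))) / ((a + b) ^ 2) ^ 2) =
      2 * ρ * a * b * ((b - a) * (s1 + s2)) / (a + b) ^ 3 := by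
  have h' : a + b ≠ 0 := ne_of_gt h
  field_simp
  ring

set_option maxHeartbeats 1000000 in
theorem f_directional_derivative_nonneg (ρ θ φ : ℝ) (hρ : 0 ≤ ρ)
    (hφ : φ ∈ Set.Icc 0 π) :
    0 ≤ deriv (fun θ' => f ρ θ' φ) θ + 2 * deriv (fun φ' => f ρ θ φ') φ := by
  obtain ⟨hφ0, hφπ⟩ := hφ
  have ha : (0:ℝ) < exp (ρ * cos θ) := exp_pos _
  have hb : (0:ℝ) < exp (ρ * cos (θ - φ)) := exp_pos _
  set a := exp (ρ * cos θ) with ha_def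
  set b := exp (ρ * cos (θ - φ)) with hb_def
  have hS : (0:ℝ) < a + b := by linarith
  -- θ-derivatives of inner functions
  have hsub : HasDerivAt (fun θ' : ℝ => θ' - φ) 1 θ := (hasDerivAt_id θ).sub_const φ
  have hcos1 : HasDerivAt (fun θ' : ℝ => cos θ') (-sin θ) θ := hasDerivAt_cos θ
  have hcos2 : HasDerivAt (fun θ' : ℝ => cos (θ' - φ)) (-sin (θ - φ)) θ := by
    simpa using hsub.cos
  have hA1 : HasDerivAt (fun θ' : ℝ => exp (ρ * cos θ')) (a * (ρ * (-sin θ))) θ :=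
    (hcos1.const_mul ρ).exp
  have hB1 : HasDerivAt (fun θ' : ℝ => exp (ρ * cos (θ' - φ))) (b * (ρ * (-sin (θ - φ)))) θ :=
    (hcos2.const_mul ρ).exp
  have hA2 : HasDerivAt (fun θ' : ℝ => exp (2 * ρ * cos θ'))
      (exp (2 * ρ * cos θ) * (2 * ρ * (-sin θ))) θ :=
    (hcos1.const_mul (2 * ρ)).exp
  have hB2 : HasDerivAt (fun θ' : ℝ => exp (2 * ρ * cos (θ' - φ)))
      (exp (2 * ρ * cos (θ - φ)) * (2 * ρ * (-sin (θ - φ)))) θ :=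
    (hcos2.const_mul (2 * ρ)).exp
  have hN : HasDerivAt (fun θ' : ℝ => exp (2 * ρ * cos θ') + exp (2 * ρ * cos (θ' - φ)))
      (exp (2 * ρ * cos θ) * (2 * ρ * (-sin θ)) +
        exp (2 * ρ * cos (θ - φ)) * (2 * ρ * (-sin (θ - φ)))) θ := hA2.add hB2
  have hSd : HasDerivAt (fun θ' : ℝ => exp (ρ * cos θ') + exp (ρ * cos (θ' - φ)))
      (a * (ρ * (-sin θ)) + b * (ρ * (-sin (θ - φ)))) θ := hA1.add hB1
  have hD : HasDerivAt (fun θ' : ℝ => (exp (ρ * cos θ') + exp (ρ * cos (θ' - φ))) ^ 2)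
      (2 * (a + b) ^ 1 * (a * (ρ * (-sin θ)) + b * (ρ * (-sin (θ - φ))))) θ := by
    simpa using hSd.fun_pow 2
  have hf1 : HasDerivAt (fun θ' => f ρ θ' φ)
      (((exp (2 * ρ * cos θ) * (2 * ρ * (-sin θ)) +
          exp (2 * ρ * cos (θ - φ)) * (2 * ρ * (-sin (θ - φ)))) * (a + b) ^ 2 -
        (exp (2 * ρ * cos θ) + exp (2 * ρ * cos (θ - φ))) *
          (2 * (a + b) ^ 1 * (a * (ρ * (-sin θ)) + b * (ρ * (-sin (θ - φ)))))) /
        ((a + b) ^ 2) ^ 2) θ := by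
    simp only [f]
    exact hN.div hD (by positivity)
  -- φ-derivatives
  have hsub' : HasDerivAt (fun φ' : ℝ => θ - φ') (-1) φ := by
    simpa using (hasDerivAt_id φ).const_sub θ
  have hcos2' : HasDerivAt (fun φ' : ℝ => cos (θ - φ')) (sin (θ - φ)) φ := by
    simpa using hsub'.cos
  have hB1' : HasDerivAt (fun φ' : ℝ => exp (ρ * cos (θ - φ'))) (b * (ρ * sin (θ - φ))) φ :=
    (hcos2'.const_mul ρ).exp
  have hB2' : HasDerivAt (fun φ' : ℝ => exp (2 * ρ * cos (θ - φ')))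
      (exp (2 * ρ * cos (θ - φ)) * (2 * ρ * sin (θ - φ))) φ :=
    (hcos2'.const_mul (2 * ρ)).exp
  have hN' : HasDerivAt (fun φ' : ℝ => exp (2 * ρ * cos θ) + exp (2 * ρ * cos (θ - φ')))
      (exp (2 * ρ * cos (θ - φ)) * (2 * ρ * sin (θ - φ))) φ := by
    simpa using (hasDerivAt_const φ (exp (2 * ρ * cos θ))).fun_add hB2'
  have hSd' : HasDerivAt (fun φ' : ℝ => exp (ρ * cos θ) + exp (ρ * cos (θ - φ')))
      (b * (ρ * sin (θ - φ))) φ := by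
    simpa using (hasDerivAt_const φ (exp (ρ * cos θ))).fun_add hB1'
  have hD' : HasDerivAt (fun φ' : ℝ => (exp (ρ * cos θ) + exp (ρ * cos (θ - φ'))) ^ 2)
      (2 * (a + b) ^ 1 * (b * (ρ * sin (θ - φ)))) φ := by
    simpa using hSd'.fun_pow 2
  have hf2 : HasDerivAt (fun φ' => f ρ θ φ')
      ((exp (2 * ρ * cos (θ - φ)) * (2 * ρ * sin (θ - φ)) * (a + b) ^ 2 -
        (exp (2 * ρ * cos θ) + exp (2 * ρ * cos (θ - φ))) *
          (2 * (a + b) ^ 1 * (b * (ρ * sin (θ - φ))))) / ((a + b) ^ 2) ^ 2) φ := by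
    simp only [f]
    exact hN'.div hD' (by positivity)
  rw [hf1.deriv, hf2.deriv]
  -- rewrite exp(2x) = exp x * exp x
  have hexpa : exp (2 * ρ * cos θ) = a * a := by
    rw [ha_def, ← exp_add]; ring_nf
  have hexpb : exp (2 * ρ * cos (θ - φ)) = b * b := by
    rw [hb_def, ← exp_add]; ring_nf
  -- key sign lemma
  have hkey : 0 ≤ (b - a) * (sin θ + sin (θ - φ)) := by
    have h1 : sin θ = sin (θ - φ / 2) * cos (φ / 2) + cos (θ - φ / 2) * sin (φ / 2) := by
      rw [← Real.sin_add]; ring_nf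
    have h2 : sin (θ - φ) = sin (θ - φ / 2) * cos (φ / 2) - cos (θ - φ / 2) * sin (φ / 2) := by
      rw [← Real.sin_sub]; ring_nf
    have h3 : cos θ = cos (θ - φ / 2) * cos (φ / 2) - sin (θ - φ / 2) * sin (φ / 2) := by
      rw [← Real.cos_add]; ring_nf
    have h4 : cos (θ - φ) = cos (θ - φ / 2) * cos (φ / 2) + sin (θ - φ / 2) * sin (φ / 2) := by
      rw [← Real.cos_sub]; ring_nf
    have hsum : sin θ + sin (θ - φ) = 2 * sin (θ - φ / 2) * cos (φ / 2) := by linarith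
    have hcs : cos (θ - φ) - cos θ = 2 * sin (θ - φ / 2) * sin (φ / 2) := by linarith
    have hch : 0 ≤ cos (φ / 2) := by
      apply Real.cos_nonneg_of_mem_Icc
      constructor <;> [linarith [Real.pi_pos]; linarith]
    have hsh : 0 ≤ sin (φ / 2) := by
      apply Real.sin_nonneg_of_nonneg_of_le_pi <;> linarith [Real.pi_pos]
    rcases le_or_gt 0 (sin (θ - φ / 2)) with h | h
    · have hst : 0 ≤ sin (θ - φ / 2) * sin (φ / 2) := mul_nonneg h hsh
      have h1 : cos θ ≤ cos (θ - φ) := by nlinarith [hcs, hst]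
      have hba : a ≤ b := by
        rw [ha_def, hb_def]
        exact exp_le_exp.2 (mul_le_mul_of_nonneg_left h1 hρ)
      have hst2 : 0 ≤ sin (θ - φ / 2) * cos (φ / 2) := mul_nonneg h hch
      have h2 : 0 ≤ sin θ + sin (θ - φ) := by nlinarith [hsum, hst2]
      exact mul_nonneg (by linarith) h2
    · have hst : sin (θ - φ / 2) * sin (φ / 2) ≤ 0 :=
        mul_nonpos_of_nonpos_of_nonneg h.le hsh
      have h1 : cos (θ - φ) ≤ cos θ := by nlinarith [hcs, hst]
      have hba : b ≤ a := by
        rw [ha_def, hb_def]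
        exact exp_le_exp.2 (mul_le_mul_of_nonneg_left h1 hρ)
      have hst2 : sin (θ - φ / 2) * cos (φ / 2) ≤ 0 :=
        mul_nonpos_of_nonpos_of_nonneg h.le hch
      have h2 : sin θ + sin (θ - φ) ≤ 0 := by nlinarith [hsum, hst2]
      have hfin : 0 ≤ -(b - a) * -(sin θ + sin (θ - φ)) :=
        mul_nonneg (by linarith) (by linarith)
      calc (0:ℝ) ≤ -(b - a) * -(sin θ + sin (θ - φ)) := hfin
        _ = (b - a) * (sin θ + sin (θ - φ)) := by ring
  -- closed form
  have heq : ((exp (2 * ρ * cos θ) * (2 * ρ * (-sin θ)) +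
          exp (2 * ρ * cos (θ - φ)) * (2 * ρ * (-sin (θ - φ)))) * (a + b) ^ 2 -
        (exp (2 * ρ * cos θ) + exp (2 * ρ * cos (θ - φ))) *
          (2 * (a + b) ^ 1 * (a * (ρ * (-sin θ)) + b * (ρ * (-sin (θ - φ)))))) /
        ((a + b) ^ 2) ^ 2 +
      2 * ((exp (2 * ρ * cos (θ - φ)) * (2 * ρ * sin (θ - φ)) * (a + b) ^ 2 -
        (exp (2 * ρ * cos θ) + exp (2 * ρ * cos (θ - φ))) *
          (2 * (a + b) ^ 1 * (b * (ρ * sin (θ - φ))))) / ((a + b) ^ 2) ^ 2) =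
      2 * ρ * a * b * ((b - a) * (sin θ + sin (θ - φ))) / (a + b) ^ 3 := by
    rw [hexpa, hexpb]
    exact f_dd_algebra ρ a b (sin θ) (sin (θ - φ)) hS
  rw [heq]
  apply div_nonneg _ (by positivity)
  have : 0 ≤ 2 * ρ * a * b := by positivity
  exact mul_nonneg this hkey
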